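/- For the Galerkin truncation $B_k^N(u) = \sum_{0<|h|,|k-h|,|k| \leq N} c_{h,k} u_h u_{k-h}$ of the 2D Navier–Stokes nonlinearity on the torus, the enstrophy is conserved: $\sum_{0 < |k| \leq N} B_k^N(u) |k|^2 \bar{u}_k = 0$ for every $N \in \mathbb{N}$ and every sequence $(u_k)$ with $u_{-k} = \bar{u}_k$. -/

import Mathlib

/-!
Write the enstrophy sum as a sum over triads `(h, k - h, -k)` of nonzero wavevectors summing to
zero, each term being `c_{h,k} |k|² u_h u_{k-h} u_{-k}` (reality of `u` turns `conj u_k` into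
`u_{-k}`). Cyclically rotating the triad permutes the truncated set of triads and leaves the
product of the `u`'s unchanged, so the sum equals a third of the sum of the cyclically symmetrised
terms. Writing `c_{h,k} = -(h^⊥ · k)(|k - h|² - |h|²) / (4π |h| |k - h| |k|)`, the factor
`h^⊥ · k` is the same for all rotations of a triad `(a, b, c)`, and `(|b|² - |a|²)|c|²` sums to
zero cyclically.
-/

noncomputable def znorm (k : ℤ × ℤ) : ℝ := Real.sqrt ((k.1 : ℝ)^2 + (k.2 : ℝ)^2)

noncomputable def nsCoeff (h k : ℤ × ℤ) : ℝ :=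
  -(1 / (4 * Real.pi)) *
    (((-h.2 : ℝ) * k.1 + (h.1 : ℝ) * k.2) / (znorm h * znorm (k - h))) *
    (znorm k - 2 * ((h.1 : ℝ) * k.1 + (h.2 : ℝ) * k.2) / znorm k)

/-- Galerkin truncation `B_k^N(u) = ∑_{0<|h|,|k-h|,|k|≤N} c_{h,k} u_h u_{k-h}`. -/
noncomputable def galerkinB (N : ℕ) (u : ℤ × ℤ → ℂ) (k : ℤ × ℤ) : ℂ :=
  ∑ h ∈ Finset.Icc (-(N : ℤ), -(N : ℤ)) ((N : ℤ), (N : ℤ)),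
    if h ≠ 0 ∧ h ≠ k ∧ k - h ≠ 0 ∧ znorm h ≤ N ∧ znorm (k - h) ≤ N then
      (nsCoeff h k : ℂ) * u h * u (k - h)
    else 0

theorem Finset.sum_eq_zero_of_cyclic_sum_eq_zero {ι M : Type*} [AddCommMonoid M]
    [IsAddTorsionFree M] {s : Finset ι} {σ : ι → ι} {f : ι → M}
    (hσ : ∀ i ∈ s, σ i ∈ s) (hσ3 : ∀ i ∈ s, σ (σ (σ i)) = i)
    (hf : ∀ i ∈ s, f i + f (σ i) + f (σ (σ i)) = 0) :
    ∑ i ∈ s, f i = 0 := by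
  have sum_comp (g : ι → M) : ∑ i ∈ s, g (σ i) = ∑ i ∈ s, g i :=
    sum_nbij' σ (fun i => σ (σ i)) hσ (fun i hi => hσ _ (hσ i hi)) hσ3 hσ3 fun _ _ => rfl
  have : 3 • ∑ i ∈ s, f i = 0 := calc
    3 • ∑ i ∈ s, f i = ∑ i ∈ s, (f i + f (σ i) + f (σ (σ i))) := by
      rw [sum_add_distrib, sum_add_distrib, sum_comp (fun i => f (σ i)), sum_comp, succ_nsmul,
        two_nsmul]
    _ = 0 := sum_eq_zero hf
  exact (nsmul_eq_zero_iff_right three_ne_zero).mp this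

lemma znorm_sq (k : ℤ × ℤ) : znorm k ^ 2 = (k.1 : ℝ) ^ 2 + (k.2 : ℝ) ^ 2 :=
  Real.sq_sqrt (by positivity)

@[simp]
lemma znorm_neg (k : ℤ × ℤ) : znorm (-k) = znorm k := by
  simp [znorm]

lemma znorm_pos {k : ℤ × ℤ} (hk : k ≠ 0) : 0 < znorm k := by
  refine Real.sqrt_pos.2 (lt_of_le_of_ne (by positivity) fun h => hk ?_)
  have h1 : (k.1 : ℝ) = 0 := by nlinarith [sq_nonneg (k.1 : ℝ), sq_nonneg (k.2 : ℝ)]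
  have h2 : (k.2 : ℝ) = 0 := by nlinarith [sq_nonneg (k.1 : ℝ), sq_nonneg (k.2 : ℝ)]
  exact Prod.ext (by exact_mod_cast h1) (by exact_mod_cast h2)

lemma mem_Icc_of_znorm_le {N : ℕ} {k : ℤ × ℤ} (hk : znorm k ≤ N) :
    k ∈ Finset.Icc (-(N : ℤ), -(N : ℤ)) ((N : ℤ), (N : ℤ)) := by
  have hN : znorm k ^ 2 ≤ (N : ℝ) ^ 2 := pow_le_pow_left₀ (Real.sqrt_nonneg _) hk 2
  rw [znorm_sq] at hN
  obtain ⟨h1l, h1r⟩ := abs_le_of_sq_le_sq' (a := (k.1 : ℝ))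
    (by nlinarith [sq_nonneg (k.2 : ℝ)]) (Nat.cast_nonneg N)
  obtain ⟨h2l, h2r⟩ := abs_le_of_sq_le_sq' (a := (k.2 : ℝ))
    (by nlinarith [sq_nonneg (k.1 : ℝ)]) (Nat.cast_nonneg N)
  exact Finset.mem_Icc.2 ⟨⟨by exact_mod_cast h1l, by exact_mod_cast h2l⟩,
    by exact_mod_cast h1r, by exact_mod_cast h2r⟩

lemma nsCoeff_eq_div {h k : ℤ × ℤ} (hh : h ≠ 0) (hk : k ≠ 0) (hkh : k - h ≠ 0) :
    nsCoeff h k = -(1 / (4 * Real.pi)) * ((-h.2 : ℝ) * k.1 + (h.1 : ℝ) * k.2) *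
      (znorm (k - h) ^ 2 - znorm h ^ 2) / (znorm h * znorm (k - h) * znorm k) := by
  have bracket : znorm (k - h) ^ 2 - znorm h ^ 2
      = znorm k ^ 2 - 2 * ((h.1 : ℝ) * k.1 + (h.2 : ℝ) * k.2) := by
    simp only [znorm_sq, Prod.fst_sub, Prod.snd_sub, Int.cast_sub]
    ring
  have := znorm_pos hh
  have := znorm_pos hk
  have := znorm_pos hkh
  rw [nsCoeff, bracket]
  field_simp

lemma nsCoeff_mul_znorm_sq_cyclic_sum {h k : ℤ × ℤ} (hh : h ≠ 0) (hk : k ≠ 0)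
    (hkh : k - h ≠ 0) :
    nsCoeff h k * znorm k ^ 2 + nsCoeff (k - h) (-h) * znorm h ^ 2
      + nsCoeff (-k) (h - k) * znorm (k - h) ^ 2 = 0 := by
  have e1 : -h - (k - h) = -k := by abel
  have e2 : h - k - -k = h := by abel
  have e3 : h - k = -(k - h) := (neg_sub k h).symm
  rw [nsCoeff_eq_div hh hk hkh,
    nsCoeff_eq_div hkh (neg_ne_zero.2 hh) (by rw [e1]; exact neg_ne_zero.2 hk),
    nsCoeff_eq_div (neg_ne_zero.2 hk) (by rw [e3]; exact neg_ne_zero.2 hkh) (by rwa [e2]),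
    e1, e2, e3, znorm_neg, znorm_neg, znorm_neg]
  have := znorm_pos hh
  have := znorm_pos hk
  have := znorm_pos hkh
  have := Real.pi_pos
  simp only [Prod.fst_sub, Prod.snd_sub, Prod.fst_neg, Prod.snd_neg, Int.cast_sub, Int.cast_neg]
  field_simp
  ring

-- A pair `(k, h)` encodes the triad `(h, k - h, -k)`; `triadRotate` sends it to `(k - h, -k, h)`.
open Classical in
noncomputable def galerkinTriads (N : ℕ) : Finset ((ℤ × ℤ) × (ℤ × ℤ)) :=
  (Finset.Icc (-(N : ℤ), -(N : ℤ)) ((N : ℤ), (N : ℤ)) ×ˢ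
      Finset.Icc (-(N : ℤ), -(N : ℤ)) ((N : ℤ), (N : ℤ))).filter fun p =>
    p.1 ≠ 0 ∧ p.2 ≠ 0 ∧ p.1 - p.2 ≠ 0 ∧
      znorm p.1 ≤ N ∧ znorm p.2 ≤ N ∧ znorm (p.1 - p.2) ≤ N

lemma mem_galerkinTriads {N : ℕ} {k h : ℤ × ℤ} :
    (k, h) ∈ galerkinTriads N ↔
      k ≠ 0 ∧ h ≠ 0 ∧ k - h ≠ 0 ∧ znorm k ≤ N ∧ znorm h ≤ N ∧ znorm (k - h) ≤ N := by
  rw [galerkinTriads, Finset.mem_filter, Finset.mem_product, and_iff_right_iff_imp]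
  exact fun hp => ⟨mem_Icc_of_znorm_le hp.2.2.2.1, mem_Icc_of_znorm_le hp.2.2.2.2.1⟩

def triadRotate (p : (ℤ × ℤ) × (ℤ × ℤ)) : (ℤ × ℤ) × (ℤ × ℤ) := (-p.2, p.1 - p.2)

lemma triadRotate_triadRotate_triadRotate (p : (ℤ × ℤ) × (ℤ × ℤ)) :
    triadRotate (triadRotate (triadRotate p)) = p :=
  Prod.ext (by simp [triadRotate]) (by simp only [triadRotate]; abel)

lemma triadRotate_mem_galerkinTriads {N : ℕ} {p : (ℤ × ℤ) × (ℤ × ℤ)}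
    (hp : p ∈ galerkinTriads N) : triadRotate p ∈ galerkinTriads N := by
  obtain ⟨k, h⟩ := p
  obtain ⟨hk, hh, hkh, hkN, hhN, hkhN⟩ := mem_galerkinTriads.1 hp
  have e : -h - (k - h) = -k := by abel
  rw [triadRotate, mem_galerkinTriads, e, znorm_neg, znorm_neg]
  exact ⟨neg_ne_zero.2 hh, hkh, neg_ne_zero.2 hk, hhN, hkhN, hkN⟩

noncomputable def triadTerm (u : ℤ × ℤ → ℂ) (p : (ℤ × ℤ) × (ℤ × ℤ)) : ℂ :=
  ((nsCoeff p.2 p.1 * znorm p.1 ^ 2 : ℝ) : ℂ) * (u p.2 * u (p.1 - p.2) * u (-p.1))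

lemma triadTerm_cyclic_sum (u : ℤ × ℤ → ℂ) {N : ℕ} {p : (ℤ × ℤ) × (ℤ × ℤ)}
    (hp : p ∈ galerkinTriads N) :
    triadTerm u p + triadTerm u (triadRotate p)
      + triadTerm u (triadRotate (triadRotate p)) = 0 := by
  obtain ⟨k, h⟩ := p
  obtain ⟨hk, hh, hkh, -⟩ := mem_galerkinTriads.1 hp
  have e1 : -h - (k - h) = -k := by abel
  have e2 : -(k - h) - -k = h := by abel
  have e3 : -(k - h) = h - k := neg_sub k h
  simp only [triadTerm, triadRotate, neg_neg, e1, e2, znorm_neg]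
  rw [e3]
  calc _ = ((nsCoeff h k * znorm k ^ 2 + nsCoeff (k - h) (-h) * znorm h ^ 2
        + nsCoeff (-k) (h - k) * znorm (k - h) ^ 2 : ℝ) : ℂ) * (u h * u (k - h) * u (-k)) := by
        push_cast; ring
    _ = 0 := by rw [nsCoeff_mul_znorm_sq_cyclic_sum hh hk hkh, Complex.ofReal_zero, zero_mul]

lemma enstrophy_sum_eq_sum_triadTerm (N : ℕ) (u : ℤ × ℤ → ℂ)
    (hreal : ∀ k : ℤ × ℤ, u (-k) = (starRingEnd ℂ) (u k)) :
    (∑ k ∈ Finset.Icc (-(N : ℤ), -(N : ℤ)) ((N : ℤ), (N : ℤ)),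
      if k ≠ 0 ∧ znorm k ≤ N then
        galerkinB N u k * ((znorm k ^ 2 : ℝ) : ℂ) * (starRingEnd ℂ) (u k)
      else 0) = ∑ p ∈ galerkinTriads N, triadTerm u p := by
  classical
  rw [galerkinTriads, Finset.sum_filter, Finset.sum_product]
  refine Finset.sum_congr rfl fun k _ => ?_
  by_cases hk : k ≠ 0 ∧ znorm k ≤ N
  · rw [if_pos hk, galerkinB, Finset.sum_mul, Finset.sum_mul]
    refine Finset.sum_congr rfl fun h _ => ?_
    by_cases hkh : h ≠ 0 ∧ k - h ≠ 0 ∧ znorm h ≤ N ∧ znorm (k - h) ≤ N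
    · rw [if_pos ⟨hkh.1, fun e => hkh.2.1 (by rw [e, sub_self]), hkh.2⟩,
        if_pos ⟨hk.1, hkh.1, hkh.2.1, hk.2, hkh.2.2⟩, triadTerm, ← hreal]
      push_cast
      ring
    · rw [if_neg fun hc => hkh ⟨hc.1, hc.2.2⟩,
        if_neg fun hc => hkh ⟨hc.2.1, hc.2.2.1, hc.2.2.2.2⟩, zero_mul, zero_mul]
  · rw [if_neg hk]
    exact (Finset.sum_eq_zero fun h _ => if_neg fun hc => hk ⟨hc.1, hc.2.2.2.1⟩).symm

/-- conservation of enstrophy by the Galerkin approximations: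
`∑_{0<|k|≤N} B_k^N(u) |k|² conj(u_k) = 0`. -/
theorem galerkin_enstrophy_conservation (N : ℕ) (u : ℤ × ℤ → ℂ)
    (hreal : ∀ k : ℤ × ℤ, u (-k) = (starRingEnd ℂ) (u k)) :
    (∑ k ∈ Finset.Icc (-(N : ℤ), -(N : ℤ)) ((N : ℤ), (N : ℤ)),
      if k ≠ 0 ∧ znorm k ≤ N then
        galerkinB N u k * ((znorm k ^ 2 : ℝ) : ℂ) * (starRingEnd ℂ) (u k)
      else 0) = 0 := by
  rw [enstrophy_sum_eq_sum_triadTerm N u hreal]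
  exact Finset.sum_eq_zero_of_cyclic_sum_eq_zero (fun _ => triadRotate_mem_galerkinTriads)
    (fun p _ => triadRotate_triadRotate_triadRotate p) (fun _ => triadTerm_cyclic_sum u)
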